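/- arXiv:1208.4695 — 2 statements merged into one kernel-verified Lean document; each statement's English description precedes it below -/
import Mathlib

section
/- Let k be a field of characteristic 0. For every integer N ≥ 2, the explicitly defined maps θ, ω_N, K_N form a homotopy retract of Ω∨ onto C: θ and ω_N are chain maps, θ∘ω_N = id_C, and id_{Ω∨} − ω_N∘θ = d∘K_N + K_N∘d. Moreover θ vanishes on the subspace Ω∨₍₂₎, and for all s ≥ 0 the image of ω_N − ω_{N+s} and the image of K_N − K_{N+s} are contained in Ω∨₍N₎. -/
open Finsupp TensorProduct

noncomputable section

variable (k : Type) [Field k] [CharZero k]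

/-- Underlying space of `Ω∨`: basis `α i ↔ Sum.inl i`, `β i ↔ Sum.inr i`. -/
abbrev Om : Type := (ℕ ⊕ ℕ) →₀ k

/-- the basis vector `α_i` of `Ω∨` (degree 0, dual of `t^i`) -/
def av (i : ℕ) : Om k := Finsupp.single (Sum.inl i) 1

/-- the basis vector `β_i` of `Ω∨` (degree 1, dual of `t^i dt`) -/
def bv (i : ℕ) : Om k := Finsupp.single (Sum.inr i) 1

/-- the differential of `Ω∨`: `d β_i = (i+1) α_{i+1}`, `d α_i = 0`. -/
def dOm : Om k →ₗ[k] Om k :=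
  Finsupp.lift (Om k) k (ℕ ⊕ ℕ) fun x =>
    match x with
    | Sum.inl _ => 0
    | Sum.inr i => ((i : k) + 1) • av k (i + 1)

/-- Underlying space of `C = C_•([0,1])`: basis `𝟎 ↔ 0`, `𝟏 ↔ 1`, `𝟎𝟏 ↔ 2`. -/
abbrev Cc : Type := Fin 3 →₀ k

/-- the degree-0 basis vector `𝟎` of `C` -/
def c0 : Cc k := Finsupp.single 0 1
/-- the degree-0 basis vector `𝟏` of `C` -/
def c1 : Cc k := Finsupp.single 1 1
/-- the degree-1 basis vector `𝟎𝟏` of `C` -/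
def c01 : Cc k := Finsupp.single 2 1

/-- the differential of `C`: `d 𝟎𝟏 = 𝟏 - 𝟎`, `d 𝟎 = d 𝟏 = 0`. -/
def dC : Cc k →ₗ[k] Cc k :=
  Finsupp.lift (Cc k) k (Fin 3) fun x => if x = 2 then c1 k - c0 k else 0

/-- the projection `θ : Ω∨ → C`. -/
def θm : Om k →ₗ[k] Cc k :=
  Finsupp.lift (Cc k) k (ℕ ⊕ ℕ) fun x =>
    match x with
    | Sum.inl 0 => c0 k
    | Sum.inl 1 => c1 k - c0 k
    | Sum.inl _ => 0
    | Sum.inr 0 => c01 k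
    | Sum.inr _ => 0

/-- the inclusion `ω_N : C → Ω∨`. -/
def ωm (N : ℕ) : Cc k →ₗ[k] Om k :=
  Finsupp.lift (Om k) k (Fin 3) fun x =>
    if x = 0 then av k 0
    else if x = 1 then ∑ p ∈ Finset.range N, av k p
    else ∑ p ∈ Finset.range (N - 1), ((p : k) + 1)⁻¹ • bv k p

/-- the homotopy `K_N : Ω∨ → Ω∨`. -/
def Km (N : ℕ) : Om k →ₗ[k] Om k :=
  Finsupp.lift (Om k) k (ℕ ⊕ ℕ) fun x =>
    match x with
    | Sum.inl 0 => 0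
    | Sum.inl 1 => - ∑ j ∈ Finset.Ico 1 (N - 1), ((j : k) + 1)⁻¹ • bv k j
    | Sum.inl (i + 2) => ((i : k) + 2)⁻¹ • bv k (i + 1)
    | Sum.inr _ => 0

/-- the filtration `Ω∨_(N)`, spanned by the `α_j` with `j ≥ N` and the `β_j` with `j ≥ N - 1`. -/
def Filt (N : ℕ) : Submodule k (Om k) :=
  Submodule.span k
    ({x | ∃ j, N ≤ j ∧ x = av k j} ∪ {x | ∃ j, N ≤ j + 1 ∧ x = bv k j})

end

/-! All identities are between linear maps out of free modules, so they are checked on basis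
vectors. The one real computation is `d (β_j / (j+1)) = α_{j+1}`: it makes `d` carry the sums
`∑ β_j / (j+1)` in `ω_N(𝟎𝟏)` and `K_N(α_1)` onto the sums `∑ α_j` in `ω_N(𝟏)`, and the
differences `ω_N - ω_{N+s}`, `K_N - K_{N+s}` are tails of these sums, hence lie in `Ω∨_(N)`. -/

open Finset

lemma sum_Ico_sub_sum_Ico_mem {M S : Type*} [AddCommGroup M] [SetLike S M]
    [AddSubgroupClass S M] (p : S) (v : ℕ → M) {a m n : ℕ} (ham : a ≤ m) (hmn : m ≤ n)
    (h : ∀ j, m ≤ j → v j ∈ p) : ∑ j ∈ Ico a m, v j - ∑ j ∈ Ico a n, v j ∈ p := by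
  rw [← sum_Ico_consecutive v ham hmn, sub_add_cancel_left]
  exact neg_mem (sum_mem fun j hj => h j (mem_Ico.1 hj).1)

section

variable (k : Type) [Field k]

lemma Om.hom_ext {M : Type*} [AddCommMonoid M] [Module k M] {f g : Om k →ₗ[k] M}
    (hα : ∀ i, f (av k i) = g (av k i)) (hβ : ∀ i, f (bv k i) = g (bv k i)) : f = g :=
  Finsupp.lhom_ext' fun x => LinearMap.ext_ring <| by rcases x with i | i; exacts [hα i, hβ i]

lemma Cc.hom_ext {M : Type*} [AddCommMonoid M] [Module k M] {f g : Cc k →ₗ[k] M}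
    (h0 : f (c0 k) = g (c0 k)) (h1 : f (c1 k) = g (c1 k)) (h01 : f (c01 k) = g (c01 k)) :
    f = g :=
  Finsupp.lhom_ext' fun x => LinearMap.ext_ring <| by fin_cases x; exacts [h0, h1, h01]

lemma Om.map_mem_of_basis {M : Type*} [AddCommGroup M] [Module k M] (f : Om k →ₗ[k] M)
    {p : Submodule k M} (hα : ∀ i, f (av k i) ∈ p) (hβ : ∀ i, f (bv k i) ∈ p) (x : Om k) :
    f x ∈ p := by
  have : p.mkQ ∘ₗ f = 0 :=
    Om.hom_ext k (fun i => (Submodule.Quotient.mk_eq_zero p).2 (hα i))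
      (fun i => (Submodule.Quotient.mk_eq_zero p).2 (hβ i))
  exact (Submodule.Quotient.mk_eq_zero p).1 (LinearMap.congr_fun this x)

lemma Cc.map_mem_of_basis {M : Type*} [AddCommGroup M] [Module k M] (f : Cc k →ₗ[k] M)
    {p : Submodule k M} (h0 : f (c0 k) ∈ p) (h1 : f (c1 k) ∈ p) (h01 : f (c01 k) ∈ p)
    (c : Cc k) : f c ∈ p := by
  have : p.mkQ ∘ₗ f = 0 :=
    Cc.hom_ext k ((Submodule.Quotient.mk_eq_zero p).2 h0)
      ((Submodule.Quotient.mk_eq_zero p).2 h1) ((Submodule.Quotient.mk_eq_zero p).2 h01)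
  exact (Submodule.Quotient.mk_eq_zero p).1 (LinearMap.congr_fun this c)

@[simp] lemma dOm_av (i : ℕ) : dOm k (av k i) = 0 := by
  simp [dOm, av]

@[simp] lemma dOm_bv (i : ℕ) : dOm k (bv k i) = ((i : k) + 1) • av k (i + 1) := by
  simp [dOm, bv]

@[simp] lemma dC_c0 : dC k (c0 k) = 0 := by simp [dC, c0]
@[simp] lemma dC_c1 : dC k (c1 k) = 0 := by simp [dC, c1]
@[simp] lemma dC_c01 : dC k (c01 k) = c1 k - c0 k := by simp [dC, c01]

@[simp] lemma θm_av_zero : θm k (av k 0) = c0 k := by simp [θm, av]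
@[simp] lemma θm_av_one : θm k (av k 1) = c1 k - c0 k := by simp [θm, av]
@[simp] lemma θm_av_add_two (i : ℕ) : θm k (av k (i + 2)) = 0 := by simp [θm, av]
@[simp] lemma θm_bv_zero : θm k (bv k 0) = c01 k := by simp [θm, bv]
@[simp] lemma θm_bv_add_one (i : ℕ) : θm k (bv k (i + 1)) = 0 := by simp [θm, bv]

@[simp] lemma ωm_c0 (N : ℕ) : ωm k N (c0 k) = av k 0 := by simp [ωm, c0]
@[simp] lemma ωm_c1 (N : ℕ) : ωm k N (c1 k) = ∑ p ∈ range N, av k p := by simp [ωm, c1]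
@[simp] lemma ωm_c01 (N : ℕ) :
    ωm k N (c01 k) = ∑ p ∈ range (N - 1), ((p : k) + 1)⁻¹ • bv k p := by
  simp [ωm, c01]

@[simp] lemma Km_av_zero (N : ℕ) : Km k N (av k 0) = 0 := by simp [Km, av]
@[simp] lemma Km_av_one (N : ℕ) :
    Km k N (av k 1) = -∑ j ∈ Ico 1 (N - 1), ((j : k) + 1)⁻¹ • bv k j := by
  simp [Km, av]
@[simp] lemma Km_av_add_two (N i : ℕ) :
    Km k N (av k (i + 2)) = (((i + 1 : ℕ) : k) + 1)⁻¹ • bv k (i + 1) := by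
  simp [Km, av]; ring_nf
@[simp] lemma Km_bv (N i : ℕ) : Km k N (bv k i) = 0 := by simp [Km, bv]

lemma av_mem_Filt {N j : ℕ} (h : N ≤ j) : av k j ∈ Filt k N :=
  Submodule.subset_span (Or.inl ⟨j, h, rfl⟩)

lemma bv_mem_Filt {N j : ℕ} (h : N ≤ j + 1) : bv k j ∈ Filt k N :=
  Submodule.subset_span (Or.inr ⟨j, h, rfl⟩)

lemma Filt_two_le_ker_θm : Filt k 2 ≤ LinearMap.ker (θm k) := by
  refine Submodule.span_le.2 ?_
  rintro _ (⟨j, hj, rfl⟩ | ⟨j, hj, rfl⟩)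
  · obtain ⟨i, rfl⟩ : ∃ i, j = i + 2 := ⟨j - 2, by omega⟩
    simp
  · obtain ⟨i, rfl⟩ : ∃ i, j = i + 1 := ⟨j - 1, by omega⟩
    simp

lemma sum_Ico_av_mem_Filt (N M : ℕ) : ∑ j ∈ Ico N M, av k j ∈ Filt k N :=
  Submodule.sum_mem _ fun _ hj => av_mem_Filt k (mem_Ico.1 hj).1

lemma sum_Ico_smul_bv_mem_Filt (N M : ℕ) (c : ℕ → k) :
    ∑ j ∈ Ico (N - 1) M, c j • bv k j ∈ Filt k N :=
  Submodule.sum_mem _ fun _ hj => Submodule.smul_mem _ _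
    (bv_mem_Filt k (Nat.sub_le_iff_le_add.1 (mem_Ico.1 hj).1))

lemma ωm_c1_eq {N : ℕ} (hN : 2 ≤ N) :
    ωm k N (c1 k) = av k 0 + av k 1 + ∑ j ∈ Ico 2 N, av k j := by
  rw [ωm_c1, range_eq_Ico, sum_eq_sum_Ico_succ_bot (by omega),
    sum_eq_sum_Ico_succ_bot (by omega), ← add_assoc]

lemma ωm_c01_eq {N : ℕ} (hN : 2 ≤ N) :
    ωm k N (c01 k) = bv k 0 + ∑ j ∈ Ico 1 (N - 1), ((j : k) + 1)⁻¹ • bv k j := by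
  rw [ωm_c01, range_eq_Ico, sum_eq_sum_Ico_succ_bot (by omega)]
  simp

lemma dC_comp_θm : dC k ∘ₗ θm k = θm k ∘ₗ dOm k := by
  refine Om.hom_ext k (fun i => ?_) (fun i => ?_)
  · rcases i with _ | _ | i <;> simp
  · rcases i with _ | i <;> simp

lemma θm_comp_ωm {N : ℕ} (hN : 2 ≤ N) : θm k ∘ₗ ωm k N = LinearMap.id := by
  have hα : θm k (∑ j ∈ Ico 2 N, av k j) = 0 :=
    Filt_two_le_ker_θm k (sum_Ico_av_mem_Filt k 2 N)
  have hβ : θm k (∑ j ∈ Ico 1 (N - 1), ((j : k) + 1)⁻¹ • bv k j) = 0 :=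
    Filt_two_le_ker_θm k (sum_Ico_smul_bv_mem_Filt k 2 (N - 1) _)
  refine Cc.hom_ext k ?_ ?_ ?_
  · simp
  · simp [ωm_c1_eq k hN, hα]
  · simp [ωm_c01_eq k hN, hβ]

lemma ωm_sub_ωm_mem_Filt (N s : ℕ) (c : Cc k) : (ωm k N - ωm k (N + s)) c ∈ Filt k N := by
  refine Cc.map_mem_of_basis k _ (by simp) ?_ ?_ c
  · simp only [LinearMap.sub_apply, ωm_c1, range_eq_Ico]
    exact sum_Ico_sub_sum_Ico_mem _ _ N.zero_le (by omega) fun j hj => av_mem_Filt k hj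
  · simp only [LinearMap.sub_apply, ωm_c01, range_eq_Ico]
    exact sum_Ico_sub_sum_Ico_mem _ _ (Nat.zero_le _) (by omega)
      fun j hj => Submodule.smul_mem _ _ (bv_mem_Filt k (by omega))

lemma Km_sub_Km_mem_Filt {N : ℕ} (hN : 2 ≤ N) (s : ℕ) (x : Om k) :
    (Km k N - Km k (N + s)) x ∈ Filt k N := by
  refine Om.map_mem_of_basis k _ (fun i => ?_) (fun i => by simp) x
  rcases i with _ | _ | i
  · simp
  · rw [LinearMap.sub_apply, Km_av_one, Km_av_one, neg_sub_neg, ← neg_sub]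
    exact neg_mem <| sum_Ico_sub_sum_Ico_mem _ _ (by omega) (by omega)
      fun j hj => Submodule.smul_mem _ _ (bv_mem_Filt k (by omega))
  · simp

variable [CharZero k]

lemma dOm_inv_smul_bv (j : ℕ) : dOm k (((j : k) + 1)⁻¹ • bv k j) = av k (j + 1) := by
  rw [map_smul, dOm_bv, smul_smul, inv_mul_cancel₀ (Nat.cast_add_one_ne_zero j), one_smul]

lemma dOm_sum_Ico_inv_smul_bv {N : ℕ} (hN : 1 ≤ N) :
    dOm k (∑ j ∈ Ico 1 (N - 1), ((j : k) + 1)⁻¹ • bv k j) = ∑ j ∈ Ico 2 N, av k j := by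
  rw [map_sum]
  simp only [dOm_inv_smul_bv]
  rw [sum_Ico_add', Nat.sub_add_cancel hN]

lemma dOm_comp_ωm {N : ℕ} (hN : 2 ≤ N) : dOm k ∘ₗ ωm k N = ωm k N ∘ₗ dC k := by
  refine Cc.hom_ext k ?_ ?_ ?_
  · simp
  · simp
  · simp only [LinearMap.comp_apply, ωm_c01_eq k hN, dC_c01, map_sub, map_add,
      dOm_sum_Ico_inv_smul_bv k (by omega : 1 ≤ N), ωm_c1_eq k hN, ωm_c0, dOm_bv,
      Nat.cast_zero, zero_add, one_smul]
    abel

lemma id_sub_ωm_comp_θm {N : ℕ} (hN : 2 ≤ N) :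
    LinearMap.id - ωm k N ∘ₗ θm k = dOm k ∘ₗ Km k N + Km k N ∘ₗ dOm k := by
  refine Om.hom_ext k (fun i => ?_) (fun i => ?_)
  · rcases i with _ | _ | i
    · simp
    · simp only [zero_add, LinearMap.sub_apply, LinearMap.add_apply, LinearMap.id_apply,
        LinearMap.comp_apply, θm_av_one, map_sub, ωm_c1_eq k hN, ωm_c0, Km_av_one, map_neg,
        dOm_sum_Ico_inv_smul_bv k (by omega : 1 ≤ N), dOm_av, map_zero, add_zero]
      abel
    · have hi : (i : k) + 1 + 1 ≠ 0 := by norm_cast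
      simp [hi]
  · rcases i with _ | i
    · simp [ωm_c01_eq k hN]
    · have hi : (i : k) + 1 + 1 ≠ 0 := by norm_cast
      simp [smul_smul, hi]

end

/-- For every `N ≥ 2`, the maps `θ`, `ω_N`, `K_N` form a homotopy
retract of `Ω∨` onto `C`: `θ` and `ω_N` are chain maps, `θ ∘ ω_N = id`,
`id - ω_N ∘ θ = d ∘ K_N + K_N ∘ d`; moreover `θ` vanishes on `Ω∨_(2)`, and for every
`s ≥ 0` the images of `ω_N - ω_{N+s}` and of `K_N - K_{N+s}` lie in `Ω∨_(N)`. -/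
theorem statement0 (k : Type) [Field k] [CharZero k] (N : ℕ) (hN : 2 ≤ N) :
    (dC k ∘ₗ θm k = θm k ∘ₗ dOm k) ∧
    (dOm k ∘ₗ ωm k N = ωm k N ∘ₗ dC k) ∧
    (θm k ∘ₗ ωm k N = LinearMap.id) ∧
    (LinearMap.id - ωm k N ∘ₗ θm k = dOm k ∘ₗ Km k N + Km k N ∘ₗ dOm k) ∧
    (∀ x ∈ Filt k 2, θm k x = 0) ∧
    (∀ s : ℕ, ∀ c : Cc k, (ωm k N - ωm k (N + s)) c ∈ Filt k N) ∧
    (∀ s : ℕ, ∀ x : Om k, (Km k N - Km k (N + s)) x ∈ Filt k N) :=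
  ⟨dC_comp_θm k, dOm_comp_ωm k hN, θm_comp_ωm k hN, id_sub_ωm_comp_θm k hN,
    fun _ hx => Filt_two_le_ker_θm k hx, ωm_sub_ωm_mem_Filt k N,
    Km_sub_Km_mem_Filt k hN⟩
end

section
/- Let k be a field of characteristic 0. For all integers k ≥ 1 and N > k, the composite θ^{⊗k}∘δ^{(k−1)} : Ω∨ → C^{⊗k} vanishes on the subspace Ω∨₍N₎. (Equivalently: if fewer than N iterated comultiplications are applied to an element of Ω∨₍N₎, then in every resulting elementary tensor at least one factor lies in Ω∨₍₂₎, on which θ vanishes.) -/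
open Finsupp TensorProduct

noncomputable section
variable (k : Type) [Field k] [CharZero k]

/-- the comultiplication `δ` on `Ω∨`:
`δ α_i = ∑_{a+b=i} α_a ⊗ α_b`, `δ β_i = ∑_{a+b=i} (β_a ⊗ α_b + α_a ⊗ β_b)`. -/
def δm : Om k →ₗ[k] Om k ⊗[k] Om k :=
  Finsupp.lift (Om k ⊗[k] Om k) k (ℕ ⊕ ℕ) fun x =>
    match x with
    | Sum.inl i => ∑ ab ∈ Finset.HasAntidiagonal.antidiagonal i, av k ab.1 ⊗ₜ[k] av k ab.2
    | Sum.inr i => ∑ ab ∈ Finset.HasAntidiagonal.antidiagonal i,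
        (bv k ab.1 ⊗ₜ[k] av k ab.2 + av k ab.1 ⊗ₜ[k] bv k ab.2)

/-- the counit `ε` on `Ω∨`: `ε α_0 = 1`, `ε α_i = 0` for `i ≥ 1`, `ε β_i = 0`. -/
def εm : Om k →ₗ[k] k :=
  Finsupp.lift k k (ℕ ⊕ ℕ) fun x =>
    match x with
    | Sum.inl 0 => 1
    | _ => 0

end

noncomputable section
variable (k : Type) [Field k] [CharZero k]

/-- `OmPow n` is the (n+1)-fold tensor power `(Ω∨)^{⊗(n+1)}`. -/
def OmPow : ℕ → ModuleCat k
  | 0 => ModuleCat.of k (Om k)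
  | n + 1 => ModuleCat.of k (Om k ⊗[k] (OmPow n))

/-- `CcPow n` is the (n+1)-fold tensor power `C^{⊗(n+1)}`. -/
def CcPow : ℕ → ModuleCat k
  | 0 => ModuleCat.of k (Cc k)
  | n + 1 => ModuleCat.of k (Cc k ⊗[k] (CcPow n))

/-- `δiter n : Ω∨ → (Ω∨)^{⊗(n+1)}` is the `n`-fold iterated comultiplication
`δ^{(n)}`, defined recursively by `δ^{(0)} = id` and `δ^{(n+1)} = (id ⊗ δ^{(n)}) ∘ δ`. -/
def δiter : (n : ℕ) → (Om k →ₗ[k] OmPow k n)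
  | 0 => LinearMap.id
  | n + 1 => (TensorProduct.map LinearMap.id (δiter n)) ∘ₗ δm k

/-- `θpow n : (Ω∨)^{⊗(n+1)} → C^{⊗(n+1)}` is the (n+1)-fold tensor power `θ^{⊗(n+1)}`. -/
def θpow : (n : ℕ) → (OmPow k n →ₗ[k] CcPow k n)
  | 0 => θm k
  | n + 1 => TensorProduct.map (θm k) (θpow n)

/-- the pure tensor `x ⊗ x ⊗ ⋯ ⊗ x` (`n+1` factors) in `C^{⊗(n+1)}`. -/
def cpow (x : Cc k) : (n : ℕ) → CcPow k n
  | 0 => x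
  | n + 1 => x ⊗ₜ[k] cpow x n

/-- the pure tensor `f 0 ⊗ f 1 ⊗ ⋯ ⊗ f n` in `C^{⊗(n+1)}`. -/
def tensorOf (f : ℕ → Cc k) : (n : ℕ) → CcPow k n
  | 0 => f 0
  | n + 1 => f 0 ⊗ₜ[k] tensorOf (fun i => f (i + 1)) n

end

/-!
Give `α_i` weight `i` and `β_i` weight `i + 1`. The comultiplication preserves weight, so
`δ^{(n)}` of a basis vector of weight `w` is a sum of elementary tensors of `n + 1` basis vectors
whose weights add up to `w`, while `θ` kills every basis vector of weight at least `2`. When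
`w ≥ n + 2` some factor has weight at least `2`, and `Ω∨₍N₎` is spanned by the basis vectors of
weight at least `N`.
-/

section Vanishing
variable {k : Type} [Field k]

lemma θm_av_eq_zero_of_two_le {i : ℕ} (hi : 2 ≤ i) : θm k (av k i) = 0 := by
  obtain ⟨j, rfl⟩ := Nat.exists_eq_add_of_le' hi
  simp [θm, av]

lemma θm_bv_eq_zero_of_one_le {i : ℕ} (hi : 1 ≤ i) : θm k (bv k i) = 0 := by
  obtain ⟨j, rfl⟩ := Nat.exists_eq_add_of_le' hi
  simp [θm, bv]

lemma δm_av (i : ℕ) :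
    δm k (av k i) = ∑ ab ∈ Finset.HasAntidiagonal.antidiagonal i, av k ab.1 ⊗ₜ[k] av k ab.2 := by
  simp [δm, av]

lemma δm_bv (i : ℕ) :
    δm k (bv k i) = ∑ ab ∈ Finset.HasAntidiagonal.antidiagonal i,
      (bv k ab.1 ⊗ₜ[k] av k ab.2 + av k ab.1 ⊗ₜ[k] bv k ab.2) := by
  simp [δm, bv]

lemma θpow_δiter_succ_eq_zero_iff (n : ℕ) (x : Om k) :
    θpow k (n + 1) (δiter k (n + 1) x) = 0 ↔
      map (θm k) (θpow k n ∘ₗ δiter k n) (δm k x) = 0 := by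
  change map (θm k) (θpow k n) (map LinearMap.id (δiter k n) (δm k x)) =
    (0 : Cc k ⊗[k] CcPow k n) ↔ _
  rw [map_map, LinearMap.comp_id]

lemma θpow_δiter_av_eq_zero {n i : ℕ} (hi : n + 2 ≤ i) : θpow k n (δiter k n (av k i)) = 0 := by
  induction n generalizing i with
  | zero => exact θm_av_eq_zero_of_two_le hi
  | succ n ih =>
    rw [θpow_δiter_succ_eq_zero_iff, δm_av, map_sum]
    refine Finset.sum_eq_zero fun ⟨a, b⟩ hab => ?_
    rw [Finset.HasAntidiagonal.mem_antidiagonal] at hab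
    rcases le_or_gt 2 a with ha | ha
    · simp [θm_av_eq_zero_of_two_le ha]
    · simp [ih (i := b) (by omega)]

lemma θpow_δiter_bv_eq_zero {n i : ℕ} (hi : n + 1 ≤ i) : θpow k n (δiter k n (bv k i)) = 0 := by
  induction n generalizing i with
  | zero => exact θm_bv_eq_zero_of_one_le hi
  | succ n ih =>
    rw [θpow_δiter_succ_eq_zero_iff, δm_bv, map_sum]
    refine Finset.sum_eq_zero fun ⟨a, b⟩ hab => ?_
    rw [Finset.HasAntidiagonal.mem_antidiagonal] at hab
    have hβα : θm k (bv k a) ⊗ₜ[k] θpow k n (δiter k n (av k b)) = 0 := by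
      rcases le_or_gt 1 a with ha | ha
      · simp [θm_bv_eq_zero_of_one_le ha]
      · simp [θpow_δiter_av_eq_zero (n := n) (i := b) (by omega)]
    have hαβ : θm k (av k a) ⊗ₜ[k] θpow k n (δiter k n (bv k b)) = 0 := by
      rcases le_or_gt 2 a with ha | ha
      · simp [θm_av_eq_zero_of_two_le ha]
      · simp [ih (i := b) (by omega)]
    rw [map_add, map_tmul, map_tmul, LinearMap.comp_apply, LinearMap.comp_apply, hβα, hαβ,
      add_zero]

end Vanishing

theorem statement5_general (k : Type) [Field k] (n N : ℕ) (hn : 1 ≤ n) (hN : n < N) :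
    ∀ x ∈ Filt k N, θpow k (n - 1) (δiter k (n - 1) x) = 0 := by
  intro x hx
  suffices Filt k N ≤ LinearMap.ker (θpow k (n - 1) ∘ₗ δiter k (n - 1)) from this hx
  refine Submodule.span_le.mpr ?_
  rintro _ (⟨j, hj, rfl⟩ | ⟨j, hj, rfl⟩)
  · exact θpow_δiter_av_eq_zero (by omega)
  · exact θpow_δiter_bv_eq_zero (by omega)

/-- For all `n ≥ 1` and `N > n`, the composite
`θ^{⊗n} ∘ δ^{(n-1)} : Ω∨ → C^{⊗n}` vanishes on the subspace `Ω∨_(N)`.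
(Here the `n`-fold tensor power is `CcPow (n-1)` and `δ^{(n-1)} = δiter (n-1)`.) -/
theorem statement5 (k : Type) [Field k] [CharZero k] (n N : ℕ) (hn : 1 ≤ n) (hN : n < N) :
    ∀ x ∈ Filt k N, θpow k (n - 1) (δiter k (n - 1) x) = 0 :=
  statement5_general k n N hn hN
end
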